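/- Assume dA ≥ 2 and dB ≥ 2. Then the complement of C₀ is dense in the set of density matrices: for every density matrix ρ on ℂ^{dA} ⊗ ℂ^{dB} and every ε > 0 there exists a density matrix σ with ‖σ − ρ‖ < ε (any fixed norm on the matrix space) such that [σ, (Tr_B σ) ⊗ I_{dB}] ≠ 0. In particular, every zero-discord state is approximated arbitrarily well by states of strictly positive discord, so zero discord can never be certified by measurements of finite precision. -/

import Mathlib

open Matrix MeasureTheory
open scoped Kronecker ComplexOrder

/-- A density matrix: positive semidefinite with unit trace. -/
def IsDensityMatrix {n : Type*} [Fintype n] (ρ : Matrix n n ℂ) : Prop :=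
  ρ.PosSemidef ∧ ρ.trace = 1

/-- Partial trace over the second subsystem. -/
noncomputable def ptraceB {dA dB : ℕ} (ρ : Matrix (Fin dA × Fin dB) (Fin dA × Fin dB) ℂ) :
    Matrix (Fin dA) (Fin dA) ℂ :=
  Matrix.of fun a a' => ∑ b, ρ (a, b) (a', b)

/-- Zero-discord (classical-quantum) states: block diagonal in some
orthonormal local basis of the first subsystem. -/
def IsZeroDiscord {dA dB : ℕ} (ρ : Matrix (Fin dA × Fin dB) (Fin dA × Fin dB) ℂ) : Prop :=
  ∃ (v : Fin dA → (Fin dA → ℂ)) (p : Fin dA → ℝ)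
    (σ : Fin dA → Matrix (Fin dB) (Fin dB) ℂ),
      (∀ j k, star (v j) ⬝ᵥ v k = if j = k then 1 else 0) ∧
      (∀ j, 0 ≤ p j) ∧ (∑ j, p j = 1) ∧
      (∀ j, IsDensityMatrix (σ j)) ∧
      ρ = ∑ j, (p j : ℂ) • (Matrix.vecMulVec (v j) (star (v j)) ⊗ₖ σ j)

attribute [local instance] Matrix.normedAddCommGroup

/-!
Let `τ` be a density matrix that does not commute with `(Tr_B τ) ⊗ I`; for `dA, dB ≥ 2` the pure
state of `(2|00⟩ + |11⟩)/√5` is one. Since the partial trace is linear, the commutator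
`[σₜ, (Tr_B σₜ) ⊗ I]` along the segment `σₜ = ρ + t (τ - ρ)` is a quadratic polynomial in `t`.
It is nonzero at `t = 1`, so it vanishes for only finitely many `t`, and any other small `t > 0`
gives a state `σₜ` near `ρ` outside `C₀`.
-/

attribute [local instance] Matrix.normSMulClass

section Quadratic

variable {K V : Type*} [Field K] [AddCommGroup V] [Module K V]

theorem finite_setOf_add_smul_add_sq_smul_eq_zero {a b c : V} {s : K}
    (hs : a + s • b + s ^ 2 • c ≠ 0) : {t : K | a + t • b + t ^ 2 • c = 0}.Finite := by
  obtain ⟨φ, hφ⟩ := Module.Projective.exists_dual_ne_zero K hs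
  let p : Polynomial K := .C (φ a) + .C (φ b) * .X + .C (φ c) * .X ^ 2
  have hp (t : K) : p.eval t = φ (a + t • b + t ^ 2 • c) := by
    simp only [p, Polynomial.eval_add, Polynomial.eval_mul, Polynomial.eval_C, Polynomial.eval_X,
      Polynomial.eval_pow, map_add, map_smul, smul_eq_mul]
    ring
  have hp₀ : p ≠ 0 := fun h => hφ (by rw [← hp, h, Polynomial.eval_zero])
  exact (Polynomial.finite_setOfPred_isRoot hp₀).subset fun t (ht : _ = 0) =>
    show p.IsRoot t by rw [Polynomial.IsRoot, hp, ht, map_zero]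

variable {A : Type*} [Ring A] [Algebra K A]

theorem mul_map_sub_map_mul_add_smul (L : A →ₗ[K] A) (x d : A) (t : K) :
    (x + t • d) * L (x + t • d) - L (x + t • d) * (x + t • d) =
      (x * L x - L x * x) + t • (x * L d + d * L x - L d * x - L x * d) +
        t ^ 2 • (d * L d - L d * d) := by
  simp only [map_add, map_smul, add_mul, mul_add, smul_mul_assoc, mul_smul_comm]
  module

theorem finite_setOf_commute_add_smul_map (L : A →ₗ[K] A) {x d : A}
    (h : ¬Commute (x + d) (L (x + d))) :
    {t : K | Commute (x + t • d) (L (x + t • d))}.Finite := by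
  have hcomm (t : K) : Commute (x + t • d) (L (x + t • d)) ↔
      (x * L x - L x * x) + t • (x * L d + d * L x - L d * x - L x * d) +
        t ^ 2 • (d * L d - L d * d) = 0 := by
    rw [commute_iff_eq, ← sub_eq_zero, mul_map_sub_map_mul_add_smul]
  simpa only [hcomm] using finite_setOf_add_smul_add_sq_smul_eq_zero (V := A) (s := (1 : K))
    ((hcomm 1).not.mp (by rwa [one_smul]))

end Quadratic

theorem IsDensityMatrix.add_smul_sub {n : Type*} [Fintype n] {ρ τ : Matrix n n ℂ}
    (hρ : IsDensityMatrix ρ) (hτ : IsDensityMatrix τ) {t : ℝ} (ht₀ : 0 ≤ t) (ht₁ : t ≤ 1) :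
    IsDensityMatrix (ρ + (t : ℂ) • (τ - ρ)) := by
  have hconvex : ρ + (t : ℂ) • (τ - ρ) = ((1 - t : ℝ) : ℂ) • ρ + (t : ℂ) • τ := by
    push_cast
    module
  rw [hconvex]
  refine ⟨(hρ.1.smul ?_).add (hτ.1.smul ?_), ?_⟩
  · exact_mod_cast sub_nonneg.mpr ht₁
  · exact_mod_cast ht₀
  · simp only [trace_add, trace_smul, hρ.2, hτ.2, smul_eq_mul]
    push_cast
    ring

section PartialTrace

variable {dA dB : ℕ}

theorem ptraceB_add (ρ τ : Matrix (Fin dA × Fin dB) (Fin dA × Fin dB) ℂ) :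
    ptraceB (ρ + τ) = ptraceB ρ + ptraceB τ := by
  ext a a'
  simp [ptraceB, Finset.sum_add_distrib]

theorem ptraceB_smul (c : ℂ) (ρ : Matrix (Fin dA × Fin dB) (Fin dA × Fin dB) ℂ) :
    ptraceB (c • ρ) = c • ptraceB ρ := by
  ext a a'
  simp [ptraceB, Finset.mul_sum]

noncomputable def ptraceBKronOne :
    Matrix (Fin dA × Fin dB) (Fin dA × Fin dB) ℂ →ₗ[ℂ]
      Matrix (Fin dA × Fin dB) (Fin dA × Fin dB) ℂ where
  toFun ρ := ptraceB ρ ⊗ₖ 1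
  map_add' ρ τ := by rw [ptraceB_add, add_kronecker]
  map_smul' c ρ := by rw [ptraceB_smul, smul_kronecker, RingHom.id_apply]

theorem ptraceBKronOne_apply (ρ : Matrix (Fin dA × Fin dB) (Fin dA × Fin dB) ℂ) :
    ptraceBKronOne ρ = ptraceB ρ ⊗ₖ 1 := rfl

theorem exists_isDensityMatrix_not_commute_ptraceBKronOne {a₀ a₁ : Fin dA} {b₀ b₁ : Fin dB}
    (ha : a₀ ≠ a₁) (hb : b₀ ≠ b₁) :
    ∃ τ : Matrix (Fin dA × Fin dB) (Fin dA × Fin dB) ℂ,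
      IsDensityMatrix τ ∧ ¬Commute τ (ptraceBKronOne τ) := by
  let u : Fin dA × Fin dB → ℂ := Pi.single (a₀, b₀) 2 + Pi.single (a₁, b₁) 1
  let τ : Matrix (Fin dA × Fin dB) (Fin dA × Fin dB) ℂ := (5 : ℂ)⁻¹ • vecMulVec u (star u)
  have hne : ((a₀, b₀) : Fin dA × Fin dB) ≠ (a₁, b₁) := by simp [ha]
  refine ⟨τ, ⟨(posSemidef_vecMulVec_self_star u).smul (by positivity), ?_⟩, fun hcomm => ?_⟩
  · norm_num [τ, u, trace_smul, dotProduct_add, hne, hne.symm]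
  · -- `Tr_B τ` is diagonal with entries `4/5, 1/5` at `a₀, a₁`, so this entry is
    -- `τ (a₀, b₀) (a₁, b₁) * (1/5 - 4/5) = 2/5 * (-3/5)`.
    have hentry : (τ * ptraceBKronOne τ - ptraceBKronOne τ * τ) (a₀, b₀) (a₁, b₁) = -6 / 25 := by
      norm_num [τ, u, ptraceBKronOne_apply, mul_apply, ptraceB, Fintype.sum_prod_type, one_apply,
        vecMulVec_apply, Pi.single_apply, ha, hb, ha.symm, hb.symm]
    rw [hcomm.eq, sub_self] at hentry
    norm_num at hentry

end PartialTrace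

/-- For `dA, dB ≥ 2`, the complement of `C₀` is dense in the
set of density matrices: every density matrix is approximated arbitrarily well
(in norm) by density matrices whose commutator with their reduced state is
nonzero, i.e. by states of strictly positive discord. -/
theorem complement_C0_dense (dA dB : ℕ) (hdA : 2 ≤ dA) (hdB : 2 ≤ dB)
    (ρ : Matrix (Fin dA × Fin dB) (Fin dA × Fin dB) ℂ) (hρ : IsDensityMatrix ρ)
    (ε : ℝ) (hε : 0 < ε) :
    ∃ σ : Matrix (Fin dA × Fin dB) (Fin dA × Fin dB) ℂ,
      IsDensityMatrix σ ∧ ‖σ - ρ‖ < ε ∧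
      σ * (ptraceB σ ⊗ₖ (1 : Matrix (Fin dB) (Fin dB) ℂ)) ≠
        (ptraceB σ ⊗ₖ (1 : Matrix (Fin dB) (Fin dB) ℂ)) * σ := by
  obtain ⟨a₀, a₁, ha⟩ := (Fin.nontrivial_iff_two_le.mpr hdA).exists_pair_ne
  obtain ⟨b₀, b₁, hb⟩ := (Fin.nontrivial_iff_two_le.mpr hdB).exists_pair_ne
  obtain ⟨τ, hτ, hτcomm⟩ := exists_isDensityMatrix_not_commute_ptraceBKronOne ha hb
  have hfinite : {t : ℂ | Commute (ρ + t • (τ - ρ)) (ptraceBKronOne (ρ + t • (τ - ρ)))}.Finite :=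
    finite_setOf_commute_add_smul_map _ (by rwa [add_sub_cancel ρ τ])
  have hδ : 0 < min 1 (ε / (‖τ - ρ‖ + 1)) := by positivity
  obtain ⟨t, ⟨ht₀, htδ⟩, hnot⟩ :=
    ((Set.Ioo_infinite hδ).sdiff (hfinite.preimage Complex.ofReal_injective.injOn)).nonempty
  refine ⟨ρ + (t : ℂ) • (τ - ρ), hρ.add_smul_sub hτ ht₀.le (htδ.le.trans (min_le_left _ _)), ?_,
    hnot⟩
  calc ‖ρ + (t : ℂ) • (τ - ρ) - ρ‖ = t * ‖τ - ρ‖ := by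
        rw [add_sub_cancel_left, norm_smul, Complex.norm_real, Real.norm_of_nonneg ht₀.le]
    _ ≤ t * (‖τ - ρ‖ + 1) := by gcongr; linarith
    _ < ε := (lt_div_iff₀ (by positivity)).mp (htδ.trans_le (min_le_right _ _))
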